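/- For all m ≥ 1, n ≥ 2 and 0 ≤ k ≤ n-1, the m-th order Eulerian numbers satisfy the recurrence T^(m)_{n,k} = (k+1)·T^(m)_{n-1,k} + (mn - k - m + 1)·T^(m)_{n-1,k-1}. -/

import Mathlib

/-- Number of descents of a list: positions `j` with `a_j > a_{j+1}`. -/
def descents (l : List ℕ) : ℕ :=
  ((List.range (l.length - 1)).filter (fun i => l.getD (i + 1) 0 < l.getD i 0)).length

/-- An `m`-Stirling permutation condition: whenever `u < v < w` and `a_u = a_w`,
then `a_v ≤ a_u`. -/
def IsStirlingPerm (l : List ℕ) : Prop :=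
  ∀ u v w : ℕ, u < v → v < w → w < l.length →
    l.getD u 0 = l.getD w 0 → l.getD v 0 ≤ l.getD u 0

/-- The multiset `{1^m, 2^m, …, n^m}` as a list. -/
def baseList (m n : ℕ) : List ℕ :=
  (List.range n).flatMap fun i => List.replicate m (i + 1)

/-- `T^(m)_{n,k}`: the number of `m`-Stirling permutations of `{1^m, …, n^m}`
with exactly `k` descents (an integer index `k`, so it vanishes for `k < 0`). -/
noncomputable def eulerianT (m n : ℕ) (k : ℤ) : ℕ :=
  Nat.card {l : List ℕ // l.Perm (baseList m n) ∧ IsStirlingPerm l ∧ (descents l : ℤ) = k}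

/-! In the convention used here, entries lying between two equal entries of an `m`-Stirling
permutation are smaller, so the `m` copies of the smallest value `1` form one contiguous block.
Deleting the block and lowering the other entries by one gives an `m`-Stirling permutation of
`{1^m, …, (n-1)^m}`; conversely the block can be inserted into any of the `m(n-1)+1` gaps of such a
permutation. If it has `d` descents, inserting the block at the front or inside a descent keeps
`d` descents (`d + 1` gaps), while each of the other `m(n-1) - d` gaps adds one. Taking `d = k` and
`d = k - 1` gives the recurrence. -/

open Finset
open scoped List

@[simp] theorem descents_nil : descents [] = 0 := rfl

@[simp] theorem descents_singleton (a : ℕ) : descents [a] = 0 := rfl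

theorem descents_cons_cons (a b : ℕ) (l : List ℕ) :
    descents (a :: b :: l) = (if b < a then 1 else 0) + descents (b :: l) := by
  by_cases h : b < a <;>
    simp +arith [descents, List.range_succ_eq_map, List.filter_map, Function.comp_def, h]

theorem descents_append_cons (l₁ : List ℕ) (b : ℕ) (l₂ : List ℕ) :
    descents (l₁ ++ b :: l₂) = descents (l₁ ++ [b]) + descents (b :: l₂) := by
  induction l₁ with
  | nil => simp
  | cons a l₁ ih =>
    cases l₁ with
    | nil => simp [descents_cons_cons]
    | cons a' l₁ =>
      simp only [List.cons_append, descents_cons_cons] at ih ⊢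
      rw [ih, add_assoc]

theorem descents_map_of_strictMono {f : ℕ → ℕ} (hf : StrictMono f) (l : List ℕ) :
    descents (l.map f) = descents l := by
  induction l with
  | nil => rfl
  | cons a l ih =>
    cases l with
    | nil => rfl
    | cons b l =>
      rw [List.map_cons, List.map_cons, descents_cons_cons, ← List.map_cons, ih,
        descents_cons_cons]
      simp only [hf.lt_iff_lt]

theorem descents_replicate_append {c : ℕ} {l : List ℕ} (hc : ∀ x ∈ l, c ≤ x) (m : ℕ) :
    descents (List.replicate m c ++ l) = descents l := by
  induction m with
  | zero => rfl
  | succ m ih =>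
    rw [List.replicate_succ, List.cons_append]
    cases h : List.replicate m c ++ l with
    | nil => obtain ⟨-, rfl⟩ := List.append_eq_nil_iff.mp h; rfl
    | cons b r =>
      have hb : c ≤ b := by
        have hb : b ∈ List.replicate m c ++ l := by simp [h]
        rcases List.mem_append.mp hb with hb | hb
        · exact (List.eq_of_mem_replicate hb).ge
        · exact hc b hb
      rw [descents_cons_cons, ← h, ih, if_neg (by omega), zero_add]

def descentSet (l : List ℕ) : Finset ℕ :=
  {i ∈ range (l.length - 1) | l.getD (i + 1) 0 < l.getD i 0}

theorem card_descentSet (l : List ℕ) : #(descentSet l) = descents l := by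
  simp [descentSet, descents, Finset.range, Finset.filter, Multiset.range]

theorem mem_descentSet {l : List ℕ} {i : ℕ} (h : i + 1 < l.length) :
    i ∈ descentSet l ↔ l[i + 1] < l[i] := by
  simp only [descentSet, Finset.mem_filter, Finset.mem_range, List.getD_eq_getElem _ _ h,
    List.getD_eq_getElem _ _ (Nat.lt_of_succ_lt h)]
  omega

/-- The gaps of `l` where inserting entries smaller than all of `l` creates no new descent:
the gap before the first entry and the gaps inside descents. -/
def descentGaps (l : List ℕ) : Finset ℕ :=
  insert 0 ((descentSet l).image (· + 1))

theorem card_descentGaps (l : List ℕ) : #(descentGaps l) = descents l + 1 := by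
  rw [descentGaps, card_insert_of_notMem (by simp),
    card_image_of_injective _ (add_left_injective 1), card_descentSet]

theorem descentGaps_subset_range (l : List ℕ) : descentGaps l ⊆ range (l.length + 1) := by
  intro j
  simp only [descentGaps, descentSet, Finset.mem_insert, Finset.mem_image, Finset.mem_filter,
    Finset.mem_range]
  omega

def insertBlock (l : List ℕ) (j m c : ℕ) : List ℕ :=
  l.take j ++ (List.replicate m c ++ l.drop j)

theorem perm_insertBlock (l : List ℕ) (j m c : ℕ) :
    (insertBlock l j m c).Perm (List.replicate m c ++ l) := by
  rw [insertBlock, ← List.append_assoc]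
  refine (List.perm_append_comm.append_right _).trans ?_
  rw [List.append_assoc, List.take_append_drop]

theorem filter_insertBlock {l : List ℕ} {j m c : ℕ} (hc : c ∉ l) :
    (insertBlock l j m c).filter (· ≠ c) = l := by
  have hne : ∀ x ∈ l, x ≠ c := fun x hx h => hc (h ▸ hx)
  conv_rhs => rw [← List.take_append_drop j l]
  rw [insertBlock, List.filter_append, List.filter_append, List.filter_replicate,
    if_neg (by simp), List.nil_append,
    List.filter_eq_self.mpr fun x hx => by simpa using hne x (List.mem_of_mem_take hx),
    List.filter_eq_self.mpr fun x hx => by simpa using hne x (List.mem_of_mem_drop hx)]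

theorem takeWhile_insertBlock {l : List ℕ} {j m c : ℕ} (hc : c ∉ l) (hm : m ≠ 0) :
    (insertBlock l j m c).takeWhile (· ≠ c) = l.take j := by
  obtain ⟨m, rfl⟩ := Nat.exists_eq_succ_of_ne_zero hm
  rw [insertBlock, List.takeWhile_append_of_pos fun x hx => by
    simpa using fun h : x = c => hc (h ▸ List.mem_of_mem_take hx)]
  simp

theorem insertBlock_injOn {m c : ℕ} (hm : m ≠ 0) :
    Set.InjOn (fun p : List ℕ × ℕ => insertBlock p.1 p.2 m c) {p | c ∉ p.1 ∧ p.2 ≤ p.1.length} := by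
  rintro ⟨l₁, j₁⟩ ⟨hc₁, hj₁⟩ ⟨l₂, j₂⟩ ⟨hc₂, hj₂⟩ h
  dsimp only at h hc₁ hj₁ hc₂ hj₂
  have hl : l₁ = l₂ := by rw [← filter_insertBlock hc₁, h, filter_insertBlock hc₂]
  subst hl
  have hj := congrArg List.length (congrArg (List.takeWhile (· ≠ c)) h)
  rw [takeWhile_insertBlock hc₁ hm, takeWhile_insertBlock hc₁ hm, List.length_take,
    List.length_take] at hj
  simp only [Prod.mk.injEq, true_and]
  omega

theorem descents_insertBlock {l : List ℕ} {j m c : ℕ} (hc : ∀ x ∈ l, c < x) (hm : m ≠ 0)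
    (hj : j ≤ l.length) :
    descents (insertBlock l j m c) = descents l + if j ∈ descentGaps l then 0 else 1 := by
  rcases j with _ | i
  · simp [insertBlock, descentGaps, descents_replicate_append fun x hx => (hc x hx).le]
  obtain ⟨m, rfl⟩ := Nat.exists_eq_succ_of_ne_zero hm
  have hi : i < l.length := hj
  set a := l[i]
  set d := l.drop (i + 1)
  have hca : c < a := hc a (List.getElem_mem hi)
  have hcd : ∀ x ∈ d, c ≤ x := fun x hx => (hc x (List.mem_of_mem_drop hx)).le
  have hins : descents (insertBlock l (i + 1) (m + 1) c)
      = descents (l.take i ++ [a]) + 1 + descents d := by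
    rw [insertBlock, List.take_add_one, List.getElem?_eq_getElem hi, Option.toList_some,
      List.append_assoc, List.singleton_append, descents_append_cons, List.replicate_succ,
      List.cons_append, descents_cons_cons, ← List.cons_append, ← List.replicate_succ,
      descents_replicate_append hcd, if_pos hca, add_assoc]
  have hl : descents l = descents (l.take i ++ [a]) + descents (a :: d) := by
    conv_lhs => rw [← List.take_append_drop i l, List.drop_eq_getElem_cons hi]
    exact descents_append_cons ..
  have hG : i + 1 ∈ descentGaps l ↔ i ∈ descentSet l := by simp [descentGaps]
  simp only [hG, hins, hl]
  rcases Nat.lt_or_ge (i + 1) l.length with hi' | hi'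
  · rw [show d = l[i + 1] :: l.drop (i + 2) from List.drop_eq_getElem_cons hi',
      descents_cons_cons]
    simp only [mem_descentSet hi']
    split_ifs <;> omega
  · have hd : d = [] := List.drop_eq_nil_of_le hi'
    have hD : i ∉ descentSet l := by simp [descentSet]; omega
    simp [hd, hD]

theorem card_filter_descents_insertBlock {l : List ℕ} {m c : ℕ} (hc : ∀ x ∈ l, c < x)
    (hm : m ≠ 0) (k : ℤ) :
    (#{j ∈ range (l.length + 1) | (descents (insertBlock l j m c) : ℤ) = k} : ℤ) =
      (if (descents l : ℤ) = k then k + 1 else 0) +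
        (if (descents l : ℤ) = k - 1 then l.length + 1 - k else 0) := by
  have hG := descentGaps_subset_range l
  have hcard := card_descentGaps l
  rw [filter_congr fun j hj => by
    rw [descents_insertBlock hc hm (Nat.lt_succ_iff.mp (mem_range.mp hj))]]
  by_cases h0 : (descents l : ℤ) = k
  · rw [filter_congr (q := (· ∈ descentGaps l)) fun j _ => by split_ifs <;> simp_all,
      filter_mem_eq_inter, inter_eq_right.mpr hG, if_pos h0, if_neg (by omega)]
    omega
  by_cases h1 : (descents l : ℤ) = k - 1
  · rw [filter_congr (q := (· ∉ descentGaps l)) fun j _ => by split_ifs <;> simp_all,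
      filter_notMem_eq_sdiff, card_sdiff_of_subset hG, card_range, if_neg h0, if_pos h1]
    have : #(descentGaps l) ≤ l.length + 1 := by simpa using card_le_card hG
    omega
  · rw [filter_false_of_mem fun j _ => by split_ifs <;> omega, if_neg h0, if_neg h1]
    simp

theorem isStirlingPerm_iff_sublist {l : List ℕ} :
    IsStirlingPerm l ↔ ∀ x y, [x, y, x] <+ l → y ≤ x := by
  constructor
  · intro h x y hsub
    obtain ⟨is, his, hinc⟩ := List.sublist_eq_map_getElem hsub
    rcases is with _ | ⟨u, _ | ⟨v, _ | ⟨w, _ | _⟩⟩⟩ <;> simp at his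
    obtain ⟨rfl, rfl, hw⟩ := his
    simp only [List.pairwise_cons, List.mem_cons, List.not_mem_nil] at hinc
    have := h u v w (by simp_all) (by simp_all) w.isLt
    simp_all
  · intro h u v w huv hvw hw heq
    rw [List.getD_eq_getElem _ _ (huv.trans (hvw.trans hw)),
      List.getD_eq_getElem _ _ hw] at heq
    rw [List.getD_eq_getElem _ _ (huv.trans (hvw.trans hw)),
      List.getD_eq_getElem _ _ (hvw.trans hw)]
    apply h
    simpa [heq] using List.map_getElem_sublist
      (is := [⟨u, by omega⟩, ⟨v, by omega⟩, ⟨w, hw⟩]) (by simp; omega)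

theorem IsStirlingPerm.sublist {l₁ l₂ : List ℕ} (hs : IsStirlingPerm l₂) (h : l₁ <+ l₂) :
    IsStirlingPerm l₁ :=
  isStirlingPerm_iff_sublist.mpr fun x y hxy =>
    isStirlingPerm_iff_sublist.mp hs x y (hxy.trans h)

theorem isStirlingPerm_map_iff {f : ℕ → ℕ} (hf : StrictMono f) {l : List ℕ} :
    IsStirlingPerm (l.map f) ↔ IsStirlingPerm l := by
  simp only [isStirlingPerm_iff_sublist]
  constructor
  · intro h x y hxy
    exact hf.le_iff_le.mp (h _ _ (by simpa using hxy.map f))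
  · intro h x y hxy
    obtain ⟨l', hl', hmap⟩ := List.sublist_map_iff.mp hxy
    rcases l' with _ | ⟨a, _ | ⟨b, _ | ⟨a', _ | _⟩⟩⟩ <;> simp at hmap
    obtain ⟨rfl, rfl, ha⟩ := hmap
    rw [← hf.injective ha] at hl'
    exact hf.monotone (h _ _ hl')

theorem List.Sublist.of_cons_sublist_append_of_notMem {α : Type*} {c : α} {r t s : List α}
    (h : c :: r <+ t ++ s) (hc : c ∉ t) : c :: r <+ s := by
  obtain ⟨p, q, hpq, hp, hq⟩ := List.sublist_append_iff.mp h
  rcases List.cons_eq_append_iff.mp hpq with ⟨rfl, rfl⟩ | ⟨p', rfl, -⟩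
  · exact hq
  · exact absurd (hp.subset List.mem_cons_self) hc

theorem eq_of_sublist_insertBlock {l : List ℕ} {j m c y : ℕ} (hc : c ∉ l)
    (h : [c, y, c] <+ insertBlock l j m c) : y = c := by
  have h₁ := h.of_cons_sublist_append_of_notMem fun h' => hc (List.mem_of_mem_take h')
  have h₂ : [c, y, c] <+ (l.drop j).reverse ++ List.replicate m c := by simpa using h₁.reverse
  have h₃ := h₂.of_cons_sublist_append_of_notMem
    (by simpa using fun h' => hc (List.mem_of_mem_drop h'))
  exact List.eq_of_mem_replicate (h₃.subset (by simp))

theorem isStirlingPerm_insertBlock_iff {l : List ℕ} {j m c : ℕ} (hc : ∀ x ∈ l, c < x) :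
    IsStirlingPerm (insertBlock l j m c) ↔ IsStirlingPerm l := by
  have hcl : c ∉ l := fun h => lt_irrefl c (hc c h)
  refine ⟨fun h => h.sublist ?_, fun h => ?_⟩
  · conv_lhs => rw [← List.take_append_drop j l]
    exact (List.sublist_append_right _ _).append_left _
  rw [isStirlingPerm_iff_sublist] at h ⊢
  intro x y hxy
  have hmem : ∀ z ∈ insertBlock l j m c, c ≤ z := by
    intro z hz
    simp only [insertBlock, List.mem_append, List.mem_replicate] at hz
    rcases hz with hz | ⟨-, rfl⟩ | hz
    exacts [(hc z (List.mem_of_mem_take hz)).le, le_rfl, (hc z (List.mem_of_mem_drop hz)).le]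
  by_cases hy : y = c
  · exact hy ▸ hmem x (hxy.subset (by simp))
  by_cases hx : x = c
  · exact absurd (eq_of_sublist_insertBlock hcl (hx ▸ hxy)) hy
  apply h
  have := hxy.filter (· ≠ c)
  rw [filter_insertBlock hcl] at this
  simpa [hx, hy] using this

theorem IsStirlingPerm.notMem_right_of_lt {l₁ l₂ : List ℕ} {c e : ℕ}
    (hs : IsStirlingPerm (l₁ ++ e :: l₂)) (hc : c ∈ l₁) (hce : c < e) : c ∉ l₂ := fun hc₂ =>
  have hsub := (List.singleton_sublist.mpr hc).append ((List.singleton_sublist.mpr hc₂).cons_cons e)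
  absurd (isStirlingPerm_iff_sublist.mp hs c e hsub) (not_le.mpr hce)

theorem IsStirlingPerm.exists_eq_insertBlock {l : List ℕ} {c : ℕ} (hs : IsStirlingPerm l)
    (hc : ∀ x ∈ l, c ≤ x) :
    ∃ l' j, (∀ x ∈ l', c < x) ∧ j ≤ l'.length ∧ l = insertBlock l' j (l.count c) c := by
  set t := l.takeWhile (· ≠ c)
  set r := l.dropWhile (· ≠ c)
  set b := r.takeWhile (· = c)
  set d := r.dropWhile (· = c)
  have hl : l = t ++ (b ++ d) := by simp [t, r, b, d]
  have hb : b = List.replicate b.length c :=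
    List.eq_replicate_iff.mpr ⟨rfl, fun x hx => by simpa using List.mem_takeWhile_imp hx⟩
  have ht : c ∉ t := fun h => by simpa using List.mem_takeWhile_imp h
  have hd : c ∉ d := by
    intro hcd
    have hd0 : d ≠ [] := List.ne_nil_of_mem hcd
    have hr0 : r ≠ [] := fun h => hd0 (by simp [d, h])
    have hcb : c ∈ b := by
      have hrc : r.head hr0 = c := by simpa [r] using List.head_dropWhile_not (· ≠ c) hr0
      simp only [b]
      rw [← List.cons_head_tail hr0, hrc]
      simp
    obtain ⟨e, d', hed⟩ := List.exists_cons_of_ne_nil hd0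
    have hec : e ≠ c := by simpa [d, hed] using List.head_dropWhile_not (· = c) hd0
    have hce : c < e := lt_of_le_of_ne (hc e (by simp [hl, hed])) hec.symm
    have hbd : IsStirlingPerm (b ++ e :: d') :=
      hs.sublist (hl ▸ hed ▸ List.sublist_append_right t (b ++ d))
    rw [hed] at hcd
    exact hbd.notMem_right_of_lt hcb hce ((List.mem_cons.mp hcd).resolve_left hec.symm)
  have hcount : l.count c = b.length := by
    rw [hl, hb]
    simp [List.count_append, List.count_eq_zero.mpr ht, List.count_eq_zero.mpr hd]
  refine ⟨t ++ d, t.length, fun x hx => ?_, by simp, ?_⟩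
  · have hxl : x ∈ l := by
      rw [hl]
      rcases List.mem_append.mp hx with hx | hx <;> simp [hx]
    have hxc : x ≠ c := by rintro rfl; rcases List.mem_append.mp hx with hx | hx <;> contradiction
    exact lt_of_le_of_ne (hc x hxl) hxc.symm
  · rw [hcount, insertBlock, List.take_left, List.drop_left, ← hb, ← hl]

open Classical in
noncomputable def stirlingPerms (B : List ℕ) : Finset (List ℕ) :=
  B.permutations.toFinset.filter IsStirlingPerm

theorem mem_stirlingPerms {B l : List ℕ} : l ∈ stirlingPerms B ↔ l.Perm B ∧ IsStirlingPerm l := by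
  simp [stirlingPerms]

theorem eulerianT_eq_card (m n : ℕ) (k : ℤ) :
    eulerianT m n k = #{l ∈ stirlingPerms (baseList m n) | (descents l : ℤ) = k} := by
  rw [eulerianT, ← Nat.card_eq_finsetCard]
  exact Nat.card_congr <| Equiv.subtypeEquivRight fun l => by simp [mem_stirlingPerms, and_assoc]

theorem card_filter_stirlingPerms_map {f : ℕ → ℕ} (hf : StrictMono f) (B : List ℕ) (k : ℤ) :
    #{l ∈ stirlingPerms (B.map f) | (descents l : ℤ) = k} =
      #{l ∈ stirlingPerms B | (descents l : ℤ) = k} := by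
  set g := Function.invFun f
  have hgf : ∀ l : List ℕ, (l.map f).map g = l := fun l => by
    rw [List.map_map, (Function.leftInverse_invFun hf.injective).comp_eq_id, List.map_id]
  have hfg : ∀ l : List ℕ, l.Perm (B.map f) → (l.map g).map f = l := fun l hl => by
    rw [List.map_map]
    refine (List.map_congr_left fun x hx => ?_).trans (List.map_id l)
    obtain ⟨b, -, rfl⟩ := List.mem_map.mp (hl.subset hx)
    exact Function.invFun_eq ⟨b, rfl⟩
  symm
  refine card_nbij' (List.map f) (List.map g) (fun l hl => ?_) (fun l hl => ?_)
    (fun l _ => hgf l) (fun l hl => hfg l (mem_stirlingPerms.mp (mem_filter.mp hl).1).1)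
  · simp only [mem_coe, mem_filter, mem_stirlingPerms] at hl ⊢
    exact ⟨⟨hl.1.1.map f, (isStirlingPerm_map_iff hf).mpr hl.1.2⟩,
      by rw [descents_map_of_strictMono hf, hl.2]⟩
  · simp only [mem_coe, mem_filter, mem_stirlingPerms] at hl ⊢
    have hperm := hl.1.1.map g
    rw [hgf] at hperm
    rw [← hfg l hl.1.1] at hl
    exact ⟨⟨hperm, (isStirlingPerm_map_iff hf).mp hl.1.2⟩, by
      rw [← descents_map_of_strictMono hf, hl.2]⟩

theorem stirlingPerms_replicate_append {B : List ℕ} {m c : ℕ} (hB : ∀ x ∈ B, c < x) :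
    stirlingPerms (List.replicate m c ++ B) =
      (stirlingPerms B ×ˢ range (B.length + 1)).image fun p => insertBlock p.1 p.2 m c := by
  ext l
  simp only [mem_image, mem_product, mem_range, mem_stirlingPerms, Prod.exists]
  constructor
  · rintro ⟨hperm, hs⟩
    have hcl : ∀ x ∈ l, c ≤ x := fun x hx => by
      rcases List.mem_append.mp (hperm.subset hx) with h | h
      exacts [(List.eq_of_mem_replicate h).ge, (hB x h).le]
    obtain ⟨l', j, hl', hj, hl⟩ := hs.exists_eq_insertBlock hcl
    have hcount : l.count c = m := by
      rw [hperm.count_eq, List.count_append, List.count_replicate_self,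
        List.count_eq_zero.mpr fun h => lt_irrefl c (hB c h), add_zero]
    rw [hcount] at hl
    have hperm' : l'.Perm B :=
      (List.perm_append_left_iff _).mp ((hl ▸ perm_insertBlock l' j m c).symm.trans hperm)
    exact ⟨l', j, ⟨⟨hperm', (isStirlingPerm_insertBlock_iff hl').mp (hl ▸ hs)⟩,
      by rw [← hperm'.length_eq]; omega⟩, hl.symm⟩
  · rintro ⟨l', j, ⟨⟨hperm, hs⟩, -⟩, rfl⟩
    have hl' : ∀ x ∈ l', c < x := fun x hx => hB x (hperm.subset hx)
    exact ⟨(perm_insertBlock l' j m c).trans (hperm.append_left _),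
      (isStirlingPerm_insertBlock_iff hl').mpr hs⟩

theorem card_filter_stirlingPerms_replicate_append {B : List ℕ} {m c : ℕ} (hB : ∀ x ∈ B, c < x)
    (hm : m ≠ 0) (k : ℤ) :
    (#{l ∈ stirlingPerms (List.replicate m c ++ B) | (descents l : ℤ) = k} : ℤ) =
      (k + 1) * #{l ∈ stirlingPerms B | (descents l : ℤ) = k} +
        (B.length + 1 - k) * #{l ∈ stirlingPerms B | (descents l : ℤ) = k - 1} := by
  have hSB : ∀ l' ∈ stirlingPerms B, (∀ x ∈ l', c < x) ∧ l'.length = B.length := fun l' h =>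
    have hp := (mem_stirlingPerms.mp h).1
    ⟨fun x hx => hB x (hp.subset hx), hp.length_eq⟩
  have hdom : ∀ p ∈ stirlingPerms B ×ˢ range (B.length + 1), c ∉ p.1 ∧ p.2 ≤ p.1.length := by
    intro p hp
    obtain ⟨hp1, hp2⟩ := mem_product.mp hp
    exact ⟨fun h => lt_irrefl c ((hSB p.1 hp1).1 c h),
      (hSB p.1 hp1).2 ▸ Nat.lt_succ_iff.mp (mem_range.mp hp2)⟩
  rw [stirlingPerms_replicate_append hB, filter_image,
    card_image_of_injOn ((insertBlock_injOn hm).mono fun p hp => hdom p (mem_filter.mp hp).1)]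
  calc (#{p ∈ stirlingPerms B ×ˢ range (B.length + 1) |
          (descents (insertBlock p.1 p.2 m c) : ℤ) = k} : ℤ)
      = ∑ l' ∈ stirlingPerms B,
          (#{j ∈ range (l'.length + 1) | (descents (insertBlock l' j m c) : ℤ) = k} : ℤ) := by
        rw [card_filter, sum_product]
        push_cast
        refine sum_congr rfl fun l' hl' => ?_
        rw [(hSB l' hl').2, card_filter]
        push_cast
        rfl
    _ = ∑ l' ∈ stirlingPerms B, ((if (descents l' : ℤ) = k then k + 1 else 0) +
          (if (descents l' : ℤ) = k - 1 then (B.length : ℤ) + 1 - k else 0)) :=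
        sum_congr rfl fun l' hl' => by
          rw [card_filter_descents_insertBlock (hSB l' hl').1 hm, (hSB l' hl').2]
    _ = _ := by
        rw [sum_add_distrib, ← sum_filter, ← sum_filter, sum_const, sum_const, nsmul_eq_mul,
          nsmul_eq_mul, mul_comm, mul_comm (_ : ℤ) (_ + 1 - k)]

theorem baseList_succ (m n : ℕ) :
    baseList m (n + 1) = List.replicate m 1 ++ (baseList m n).map (· + 1) := by
  simp [baseList, List.range_succ_eq_map, List.flatMap_map, List.map_flatMap,
    List.map_replicate]

theorem length_baseList (m n : ℕ) : (baseList m n).length = m * n := by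
  simp [baseList, List.length_flatMap, mul_comm]

theorem eulerianT_recurrence_general (m n : ℕ) (k : ℤ) (hm : 1 ≤ m) (hn : 2 ≤ n) :
    (eulerianT m n k : ℤ) =
      (k + 1) * (eulerianT m (n - 1) k : ℤ) +
        ((m : ℤ) * (n : ℤ) - k - (m : ℤ) + 1) * (eulerianT m (n - 1) (k - 1) : ℤ) := by
  obtain ⟨n, rfl⟩ : ∃ n', n = n' + 1 := ⟨n - 1, by omega⟩
  have hB : ∀ x ∈ (baseList m n).map (· + 1), 1 < x := by
    simp only [baseList, List.mem_map, List.mem_flatMap, List.mem_replicate]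
    omega
  have hsucc : StrictMono (· + 1 : ℕ → ℕ) := fun _ _ h => Nat.add_lt_add_right h 1
  rw [eulerianT_eq_card, baseList_succ, card_filter_stirlingPerms_replicate_append hB (by omega),
    card_filter_stirlingPerms_map hsucc, card_filter_stirlingPerms_map hsucc, Nat.add_sub_cancel,
    eulerianT_eq_card, eulerianT_eq_card, List.length_map, length_baseList]
  push_cast
  ring

theorem eulerianT_recurrence (m n : ℕ) (k : ℤ) (hm : 1 ≤ m) (hn : 2 ≤ n)
    (hk0 : 0 ≤ k) (hk : k ≤ (n : ℤ) - 1) :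
    (eulerianT m n k : ℤ) =
      (k + 1) * (eulerianT m (n - 1) k : ℤ) +
        ((m : ℤ) * (n : ℤ) - k - (m : ℤ) + 1) * (eulerianT m (n - 1) (k - 1) : ℤ) :=
  eulerianT_recurrence_general m n k hm hn
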